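/- If G is a minimal (p, q)-Ramsey graph, then G is not a Sperner graph; that is, there is no pair of distinct vertices u, v of G with N_G(u) ⊆ N_G(v). -/

import Mathlib

open SimpleGraph

/-- A monochromatic `n`-clique of color `col` in the 2-coloring `c` of the edges of `G`. -/
def IsMonoNClique {V : Type} (G : SimpleGraph V) (c : Sym2 V → Bool) (col : Bool)
    (n : ℕ) (t : Finset V) : Prop :=
  G.IsNClique n t ∧ ∀ u ∈ t, ∀ v ∈ t, u ≠ v → c s(u, v) = col

/-- A 2-coloring of the edges of `G` is `(p, q)`-free if it contains no `p`-clique of the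
first color and no `q`-clique of the second color. -/
def IsFree {V : Type} (G : SimpleGraph V) (p q : ℕ) (c : Sym2 V → Bool) : Prop :=
  (¬ ∃ t : Finset V, IsMonoNClique G c true p t) ∧
  (¬ ∃ t : Finset V, IsMonoNClique G c false q t)

/-- `G → (p, q)`: every 2-coloring of the edges of `G` contains a `p`-clique of the first
color or a `q`-clique of the second color. -/
def Arrows {V : Type} (G : SimpleGraph V) (p q : ℕ) : Prop :=
  ∀ c : Sym2 V → Bool, ¬ IsFree G p q c

/-- `G` is a minimal `(p, q)`-Ramsey graph: `G → (p, q)` and `H ↛ (p, q)` for every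
proper subgraph `H` of `G` (on a vertex subset `s`, with edge set contained in that of `G`). -/
def MinimalArrows {V : Type} (G : SimpleGraph V) (p q : ℕ) : Prop :=
  Arrows G p q ∧
    ∀ (s : Set V) (H : SimpleGraph ↥s), H ≤ G.induce s →
      (s ≠ Set.univ ∨ H ≠ G.induce s) → ¬ Arrows H p q

/-- The degree of a vertex. -/
noncomputable def deg {V : Type} (G : SimpleGraph V) (v : V) : ℕ :=
  (G.neighborSet v).ncard

/-- Minimum degree. -/
noncomputable def minDeg {V : Type} (G : SimpleGraph V) : ℕ :=
  sInf (Set.range (deg G))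

/-- Maximum degree. -/
noncomputable def maxDeg {V : Type} (G : SimpleGraph V) : ℕ :=
  sSup (Set.range (deg G))

/-- Independence number: the clique number of the complement. -/
noncomputable def indepNum {V : Type} (G : SimpleGraph V) : ℕ :=
  Gᶜ.cliqueNum

/-- The graph obtained from `H` by adding one new vertex whose neighborhood is `M`. -/
def addVertex {W : Type} (H : SimpleGraph W) (M : Set W) : SimpleGraph (Option W) where
  Adj x y :=
    match x, y with
    | some a, some b => H.Adj a b
    | some a, none => a ∈ M
    | none, some b => b ∈ M
    | none, none => False
  symm := by
    refine ⟨?_⟩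
    rintro (_ | a) (_ | b) h
    · exact h.elim
    · exact h
    · exact h
    · exact h.symm
  loopless := by
    refine ⟨?_⟩
    rintro (_ | a) h
    · exact h.elim
    · exact H.irrefl h

/-- `c'` extends the 2-coloring `c` to the graph with one added vertex. -/
def ExtendsTo {W : Type} (c : Sym2 W → Bool) (c' : Sym2 (Option W) → Bool) : Prop :=
  ∀ e : Sym2 W, c' (e.map some) = c e

/-- `M` is a marked vertex set in `H`: some `(3,3)`-free 2-coloring of the edges of `H`
cannot be extended to a `(3,3)`-free 2-coloring of the edges of `H` plus a new vertex
whose neighborhood is `M`. -/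
def IsMarked {W : Type} (H : SimpleGraph W) (M : Set W) : Prop :=
  ∃ c : Sym2 W → Bool, IsFree H 3 3 c ∧
    ∀ c' : Sym2 (Option W) → Bool, ExtendsTo c c' → ¬ IsFree (addVertex H M) 3 3 c'

/-- A complete family of marked vertex sets in `H`. -/
def IsCompleteFamily {W ι : Type} (H : SimpleGraph W) (M : ι → Set W) : Prop :=
  (∀ i, IsMarked H (M i)) ∧
  ∀ c : Sym2 W → Bool, IsFree H 3 3 c →
    ∃ i, ∀ c' : Sym2 (Option W) → Bool, ExtendsTo c c' → ¬ IsFree (addVertex H (M i)) 3 3 c'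

/-- The `K_3`-multiplicity of `G`: the minimum number of monochromatic triangles over
all 2-colorings of the edges of `G`. -/
noncomputable def K3Multiplicity {V : Type} (G : SimpleGraph V) : ℕ :=
  sInf {m | ∃ c : Sym2 V → Bool,
    {t : Finset V | ∃ col, IsMonoNClique G c col 3 t}.ncard = m}

/-- If `G` is a minimal `(p, q)`-Ramsey graph, then `G` is not a Sperner graph: there is no
pair of distinct vertices `u, v` with `N_G(u) ⊆ N_G(v)`. -/
theorem stmt_0 {V : Type} [Fintype V] (G : SimpleGraph V) (p q : ℕ) (hp : 2 ≤ p) (hq : 2 ≤ q)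
    (hmin : MinimalArrows G p q) :
    ¬ ∃ u v : V, u ≠ v ∧ G.neighborSet u ⊆ G.neighborSet v := by
  classical
  rintro ⟨u, v, huv, hsub⟩
  have hnadj : ¬ G.Adj u v := fun h => G.irrefl (hsub h)
  set s : Set V := {u}ᶜ with hs
  have hvs : v ∈ s := by simp [hs]; exact fun h => huv h.symm
  have hsne : s ≠ Set.univ := by
    intro h
    have hu : u ∈ s := h ▸ Set.mem_univ u
    simp [hs] at hu
  have hfree := hmin.2 s (G.induce s) le_rfl (Or.inl hsne)
  rw [Arrows] at hfree
  push_neg at hfree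
  obtain ⟨c0, hc0⟩ := hfree
  set g : V → ↥s := fun w => if h : w = u then ⟨v, hvs⟩ else ⟨w, by simpa [hs] using h⟩ with hg
  set c' : Sym2 V → Bool := fun e => c0 (Sym2.map g e) with hc'
  have key : ∀ (col : Bool) (n : ℕ) (t : Finset V), IsMonoNClique G c' col n t →
      ∃ t', IsMonoNClique (G.induce s) c0 col n t' := by
    intro col n t ht
    -- v ∉ t when u ∈ t
    have hnotboth : ¬ (u ∈ t ∧ v ∈ t) := by
      rintro ⟨hu, hv⟩
      exact hnadj (ht.1.1 hu hv huv)
    have hgval : ∀ a ∈ t, ∀ b ∈ t, a ≠ b →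
        G.Adj ((g a : V)) ((g b : V)) := by
      intro a ha b hb hab
      have hadj := ht.1.1 ha hb hab
      by_cases hau : a = u <;> by_cases hbu : b = u
      · exact absurd (hau.trans hbu.symm) hab
      · subst hau
        simp only [hg, dif_pos rfl, dif_neg hbu]
        exact hsub hadj
      · subst hbu
        simp only [hg, dif_pos rfl, dif_neg hau]
        exact (hsub hadj.symm).symm
      · simp only [hg, dif_neg hau, dif_neg hbu]
        exact hadj
    have hinj : Set.InjOn g t := by
      intro a ha b hb hab
      by_cases hau : a = u <;> by_cases hbu : b = u
      · exact hau.trans hbu.symm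
      · exfalso
        subst hau
        simp only [hg, dif_pos rfl, dif_neg hbu, Subtype.mk.injEq] at hab
        exact hnotboth ⟨ha, hab ▸ hb⟩
      · exfalso
        subst hbu
        simp only [hg, dif_pos rfl, dif_neg hau, Subtype.mk.injEq] at hab
        exact hnotboth ⟨hb, hab ▸ ha⟩
      · simpa only [hg, dif_neg hau, dif_neg hbu, Subtype.mk.injEq] using hab
    refine ⟨t.image g, ⟨?_, ?_⟩, ?_⟩
    · intro x hx y hy hxy
      simp only [Finset.coe_image, Set.mem_image, Finset.mem_coe] at hx hy
      obtain ⟨a, ha, rfl⟩ := hx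
      obtain ⟨b, hb, rfl⟩ := hy
      have hab : a ≠ b := fun h => hxy (h ▸ rfl)
      exact hgval a ha b hb hab
    · rw [Finset.card_image_of_injOn hinj]
      exact ht.1.2
    · intro x hx y hy hxy
      simp only [Finset.mem_image] at hx hy
      obtain ⟨a, ha, rfl⟩ := hx
      obtain ⟨b, hb, rfl⟩ := hy
      have hab : a ≠ b := fun h => hxy (h ▸ rfl)
      have := ht.2 a ha b hb hab
      simpa [hc', Sym2.map_pair_eq] using this
  have hG := hmin.1 c'
  rw [IsFree] at hG
  rcases not_and_or.mp hG with h | h <;> rw [not_not] at h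
  · obtain ⟨t, ht⟩ := h
    exact hc0.1 (key true p t ht)
  · obtain ⟨t, ht⟩ := h
    exact hc0.2 (key false q t ht)
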